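/- arXiv:2205.15487 — 2 statements merged into one kernel-verified Lean document; each statement's English description precedes it below -/
import Mathlib

section
/- Let Q be a quiver and let i, j be two vertices of Q. (1) The (i,w)-grade u_{i,w}(j) is independent of the choice of the walk w from i to j if and only if for every cyclic walk w' whose starting vertex lies on a walk from i to j one has u_{s(w'),w'}(t(w')) = 0. (2) If Q is connected and i is a vertex of Q, then for every vertex j the grade u_{i,w}(j) is independent of the walk w from i to j if and only if u_{i,w'}(i) = 0 for every cyclic walk w' starting and ending at i. -/
/-! ### Walks in a quiver and the grade function -/

/-- A walk in a quiver from `i` to `j`: a finite sequence of arrows, each traversed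
either forwards (`fwd`) or backwards (`bwd`).  This encodes the alternating sequences
of paths `(p_0, …, p_r)` of the paper: the forward steps make up the paths with even
index and the backward steps the paths with odd index. -/
inductive QWalk (V : Type) [Quiver.{0} V] : V → V → Type
  | nil (i : V) : QWalk V i i
  | fwd {i j k : V} (α : i ⟶ j) (w : QWalk V j k) : QWalk V i k
  | bwd {i j k : V} (α : j ⟶ i) (w : QWalk V j k) : QWalk V i k

namespace QWalk

variable {V : Type} [Quiver.{0} V]

/-- The grade `u_{i,w}(j)` of a walk: the number of forwardly traversed arrows minus
the number of backwardly traversed arrows, i.e. `Σ_{h} (-1)^h l(p_h)`. -/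
def grade : ∀ {i j : V}, QWalk V i j → ℤ
  | _, _, .nil _ => 0
  | _, _, .fwd _ w => w.grade + 1
  | _, _, .bwd _ w => w.grade - 1

/-- The vertex `v` lies on the walk `w`. -/
def Mem : ∀ {i j : V}, QWalk V i j → V → Prop
  | _, _, .nil i, v => v = i
  | _, _, @QWalk.fwd _ _ i _ _ _ w, v => v = i ∨ w.Mem v
  | _, _, @QWalk.bwd _ _ i _ _ _ w, v => v = i ∨ w.Mem v

/-- Concatenation of walks. -/
def append : ∀ {i j l : V}, QWalk V i j → QWalk V j l → QWalk V i l
  | _, _, _, .nil _, w' => w'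
  | _, _, _, .fwd α w, w' => .fwd α (w.append w')
  | _, _, _, .bwd α w, w' => .bwd α (w.append w')

/-- All vertices of the walk lie in the set `S`, i.e. the walk is a walk of the full
subquiver on `S`. -/
def InSet {i j : V} (S : Set V) (w : QWalk V i j) : Prop := ∀ v : V, w.Mem v → v ∈ S

/-- `v` is a sink of the walk `w`: the walk passes through `v`, arriving along an arrow
pointing towards `v` and leaving along an arrow pointing towards `v`
(this is a vertex `t(p_{2h}) = t(p_{2h+1})` of a walk `(p_0, …, p_r)` in the paper). -/
def IsSink {i j : V} (w : QWalk V i j) (v : V) : Prop :=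
  ∃ (a b : V) (α : a ⟶ v) (β : b ⟶ v) (w₁ : QWalk V i a) (w₂ : QWalk V b j),
    w = w₁.append (.fwd α (.bwd β w₂))

/-- `v` is a source of the walk `w`: the walk passes through `v`, arriving along an arrow
pointing away from `v` and leaving along an arrow pointing away from `v`
(this is a vertex `s(p_{2h+1}) = s(p_{2h+2})` of a walk in the paper). -/
def IsSource {i j : V} (w : QWalk V i j) (v : V) : Prop :=
  ∃ (a b : V) (α : v ⟶ a) (β : v ⟶ b) (w₁ : QWalk V i a) (w₂ : QWalk V b j),
    w = w₁.append (.bwd α (.fwd β w₂))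

end QWalk

/-- A quiver is *nicely-graded* if every cyclic walk has grade `0`,
i.e. `u_{i,w}(i) = 0` for every vertex `i` and every cyclic walk `w` from `i` to `i`. -/
def NicelyGraded (V : Type) [Quiver.{0} V] : Prop :=
  ∀ (i : V) (w : QWalk V i i), w.grade = 0

/-- A quiver is connected if any two vertices are joined by a walk. -/
def WalkConnected (V : Type) [Quiver.{0} V] : Prop :=
  ∀ a b : V, Nonempty (QWalk V a b)

/-!
Grades add under concatenation and change sign under reversal. Hence two walks `w, w'` from `i`
to `j` differ in grade by the grade of the cycle `w · w'⁻¹` at `i`; conversely, a cycle `c` at a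
vertex `v` of a walk `w = w₁ · w₂` from `i` to `j` yields the walk `w₁ · c · w₂`, whose grade
exceeds that of `w` by the grade of `c`.
-/

namespace QWalk

variable {V : Type} [Quiver.{0} V]

@[simp]
theorem grade_nil (i : V) : (nil i : QWalk V i i).grade = 0 := rfl

@[simp]
theorem grade_fwd {i j k : V} (α : i ⟶ j) (w : QWalk V j k) : (fwd α w).grade = w.grade + 1 :=
  rfl

@[simp]
theorem grade_bwd {i j k : V} (α : j ⟶ i) (w : QWalk V j k) : (bwd α w).grade = w.grade - 1 :=
  rfl

@[simp]
theorem grade_append : ∀ {i j l : V} (w : QWalk V i j) (w' : QWalk V j l),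
    (w.append w').grade = w.grade + w'.grade
  | _, _, _, .nil _, _ => by simp [append]
  | _, _, _, .fwd _ w, w' => by simp [append, grade_append w w']; ring
  | _, _, _, .bwd _ w, w' => by simp [append, grade_append w w']; ring

def reverse : ∀ {i j : V}, QWalk V i j → QWalk V j i
  | _, _, .nil i => .nil i
  | _, _, .fwd α w => w.reverse.append (.bwd α (.nil _))
  | _, _, .bwd α w => w.reverse.append (.fwd α (.nil _))

@[simp]
theorem grade_reverse : ∀ {i j : V} (w : QWalk V i j), w.reverse.grade = -w.grade
  | _, _, .nil _ => rfl
  | _, _, .fwd _ w => by simp [reverse, grade_reverse w]; ring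
  | _, _, .bwd _ w => by simp [reverse, grade_reverse w]; ring

theorem start_mem : ∀ {i j : V} (w : QWalk V i j), w.Mem i
  | _, _, .nil _ => rfl
  | _, _, .fwd _ _ => Or.inl rfl
  | _, _, .bwd _ _ => Or.inl rfl

theorem exists_eq_append_of_mem : ∀ {i j v : V} {w : QWalk V i j}, w.Mem v →
    ∃ (w₁ : QWalk V i v) (w₂ : QWalk V v j), w = w₁.append w₂
  | _, _, _, .nil _, hv => by cases hv; exact ⟨.nil _, .nil _, rfl⟩
  | _, _, _, .fwd α _, hv => by
      rcases hv with rfl | hv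
      · exact ⟨.nil _, _, rfl⟩
      · obtain ⟨w₁, w₂, rfl⟩ := exists_eq_append_of_mem hv
        exact ⟨.fwd α w₁, w₂, rfl⟩
  | _, _, _, .bwd α _, hv => by
      rcases hv with rfl | hv
      · exact ⟨.nil _, _, rfl⟩
      · obtain ⟨w₁, w₂, rfl⟩ := exists_eq_append_of_mem hv
        exact ⟨.bwd α w₁, w₂, rfl⟩

theorem grade_eq_of_forall_cycle_grade_eq_zero {i j : V}
    (h : ∀ c : QWalk V i i, c.grade = 0) (w w' : QWalk V i j) : w.grade = w'.grade := by
  have := h (w.append w'.reverse)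
  simp only [grade_append, grade_reverse] at this
  linarith

theorem cycle_grade_eq_zero_of_forall_grade_eq {i j v : V}
    (h : ∀ w w' : QWalk V i j, w.grade = w'.grade) {w : QWalk V i j} (hv : w.Mem v)
    (c : QWalk V v v) : c.grade = 0 := by
  obtain ⟨w₁, w₂, rfl⟩ := exists_eq_append_of_mem hv
  have := h (w₁.append w₂) (w₁.append (c.append w₂))
  simp only [grade_append] at this
  linarith

end QWalk

open QWalk in
/-- Proposition `cyclezero`.
Let `Q` be a quiver and `i`, `j` two vertices.
(1) The `(i,w)`-grade `u_{i,w}(j)` is independent of the choice of the walk `w` from `i`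
to `j` if and only if for every cyclic walk `w'` whose starting vertex lies on a walk
from `i` to `j` one has `u_{s(w'),w'}(t(w')) = 0`.
(2) If `Q` is connected and `i` is a vertex of `Q`, then for every vertex `j` the grade
`u_{i,w}(j)` is independent of the walk `w` from `i` to `j` if and only if
`u_{i,w'}(i) = 0` for every cyclic walk `w'` starting and ending at `i`. -/
theorem grade_independent_iff_cyclic_grade_zero {V : Type} [Quiver.{0} V] :
    (∀ i j : V,
      (∀ w w' : QWalk V i j, w.grade = w'.grade) ↔
        (∀ (w : QWalk V i j) (v : V), w.Mem v → ∀ w' : QWalk V v v, w'.grade = 0)) ∧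
    (WalkConnected V → ∀ i : V,
      (∀ (j : V) (w w' : QWalk V i j), w.grade = w'.grade) ↔
        (∀ w' : QWalk V i i, w'.grade = 0)) := by
  refine ⟨fun i j => ⟨?_, ?_⟩, fun _ i => ⟨?_, ?_⟩⟩
  · exact fun h _ _ hv => cycle_grade_eq_zero_of_forall_grade_eq h hv
  · exact fun h w => grade_eq_of_forall_cycle_grade_eq_zero (h w i w.start_mem) w
  · exact fun h c => by simpa using h i c (.nil i)
  · exact fun h _ => grade_eq_of_forall_cycle_grade_eq_zero h
end

section
/- Let Q̄ be a stable n-translation quiver with n-translation τ. (1) If p and p' are bound paths with t(p) = t(p') = i, then there are bound paths q and q' with s(q) = s(q') = τi, t(q) = s(p) and t(q') = s(p'), such that l(p) + l(q) = n+1 = l(p') + l(q'). (2) If p and p' are bound paths with s(p) = s(p') = j, then there are bound paths q and q' with t(q) = t(q') = τ^{−1}j, s(q) = t(p) and s(q') = t(p'), such that l(p) + l(q) = n+1 = l(p') + l(q'). -/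
/-! ### Bound quivers, bound paths, properly-graded quivers -/

noncomputable section

open Quiver

/-- A vertex `v` lies on the path `p`. -/
def Quiver.Path.MemV {V : Type} [Quiver.{1} V] {i : V} :
    ∀ {j : V}, Quiver.Path i j → V → Prop
  | _, .nil, v => v = i
  | j, .cons p _, v => v = j ∨ p.MemV v

/-- A *bound quiver* over the field `k`: a quiver together with, for each pair of
vertices, a set of relations, each relation being a formal `k`-linear combination
(a finitely supported function) of paths with that source and target. -/
structure BoundQuiver (k : Type) [Field k] (V : Type) [Quiver.{1} V] where
  rel : ∀ i j : V, Set (Quiver.Path i j →₀ k)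

namespace BoundQuiver

variable {k : Type} [Field k] {V : Type} [Quiver.{1} V]

/-- The homogeneous component between `i` and `j` of the two-sided ideal `(ρ)` of the
path algebra `kQ` generated by the relations: the span of all elements obtained from a
relation by composing with a path on either side. -/
def idl (B : BoundQuiver k V) (i j : V) : Submodule k (Quiver.Path i j →₀ k) :=
  Submodule.span k
    { x | ∃ (a b : V) (pre : Quiver.Path i a) (post : Quiver.Path b j)
        (r : Quiver.Path a b →₀ k), r ∈ B.rel a b ∧
          x = Finsupp.mapDomain (fun p => (pre.comp p).comp post) r }

/-- A path is a *bound path* if its image in the quotient algebra `kQ/(ρ)` is nonzero,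
i.e. it does not lie in the ideal generated by the relations. -/
def Bound (B : BoundQuiver k V) {i j : V} (p : Quiver.Path i j) : Prop :=
  Finsupp.single p (1 : k) ∉ B.idl i j

/-- A *maximal bound path*: a bound path which is not a proper subpath of another
bound path. -/
def MaxBound (B : BoundQuiver k V) {i j : V} (p : Quiver.Path i j) : Prop :=
  B.Bound p ∧ ∀ {i' j' : V} (x : Quiver.Path i' i) (y : Quiver.Path j j'),
    B.Bound ((x.comp p).comp y) → x.length = 0 ∧ y.length = 0

/-- A bound quiver is *`n`-properly-graded* if all maximal bound paths have the same
length `n`. -/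
def ProperlyGraded (B : BoundQuiver k V) (n : ℕ) : Prop :=
  ∀ {i j : V} (p : Quiver.Path i j), B.MaxBound p → p.length = n

end BoundQuiver

/-- The quiver has no oriented cycles. -/
def QuiverAcyclic (V : Type) [Quiver.{1} V] : Prop :=
  ∀ (i : V) (p : Quiver.Path i i), p.length = 0

end
/-! ### Stable n-translation quivers, complete τ-slices and τ-mutations -/

noncomputable section

/-- `B` is a *stable `n`-translation quiver* with `n`-translation `τ`: the bound quiver
of a graded self-injective algebra of Loewy length `n+2`.  Every maximal bound path
has length `n+1` and runs from `τ i` to `i`, and (self-injectivity) every bound path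
can be completed on either side to a maximal bound path. -/
structure IsStableTranslationQuiver {k : Type} [Field k] {V : Type} [Quiver.{1} V]
    (B : BoundQuiver k V) (n : ℕ) (τ : V ≃ V) : Prop where
  max_len : ∀ {i j : V} (p : Quiver.Path i j), B.MaxBound p → p.length = n + 1
  max_src : ∀ {i j : V} (p : Quiver.Path i j), B.MaxBound p → i = τ j
  extend_left : ∀ {i j : V} (p : Quiver.Path i j), B.Bound p →
    ∃ q : Quiver.Path (τ j) i, B.MaxBound (q.comp p)
  extend_right : ∀ {i j : V} (p : Quiver.Path i j), B.Bound p →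
    ∃ q : Quiver.Path j (τ.symm i), B.MaxBound (p.comp q)

/-- `τ` has finitely many orbits on the vertices. -/
def FinitelyManyOrbits {V : Type} (τ : V ≃ V) : Prop :=
  ∃ F : Finset V, ∀ v : V, ∃ m : ℤ, (τ ^ m) v ∈ F

/-- `S` is a *complete `τ`-slice*: a full convex subquiver whose vertex set meets each
`τ`-orbit exactly once. -/
structure IsCompleteTauSlice {V : Type} [Quiver.{1} V] (τ : V ≃ V) (S : Set V) : Prop where
  orbit_unique : ∀ v : V, ∃! m : ℤ, (τ ^ m) v ∈ S
  convex : ∀ {i j : V} (p : Quiver.Path i j), i ∈ S → j ∈ S → ∀ v : V, p.MemV v → v ∈ S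

/-- `i` is a source of the full subquiver on `S`. -/
def IsSliceSource {V : Type} [Quiver.{1} V] (S : Set V) (i : V) : Prop :=
  i ∈ S ∧ ∀ j ∈ S, IsEmpty (j ⟶ i)

/-- `i` is a sink of the full subquiver on `S`. -/
def IsSliceSink {V : Type} [Quiver.{1} V] (S : Set V) (i : V) : Prop :=
  i ∈ S ∧ ∀ j ∈ S, IsEmpty (i ⟶ j)

/-- The τ-mutation `s_i^+ S` of a complete τ-slice `S` at a source `i`:
remove `i` and add `τ⁻¹ i`. -/
def mutPlus {V : Type} (τ : V ≃ V) (S : Set V) (i : V) : Set V :=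
  insert (τ.symm i) (S \ {i})

/-- The τ-mutation `s_j^- S` of a complete τ-slice `S` at a sink `j`:
remove `j` and add `τ j`. -/
def mutMinus {V : Type} (τ : V ≃ V) (S : Set V) (j : V) : Set V :=
  insert (τ j) (S \ {j})

/-- Iterated source mutations `s^+_{i_r} ⋯ s^+_{i_1} S` along a list `[i_1, …, i_r]`. -/
def mutPlusList {V : Type} (τ : V ≃ V) : Set V → List V → Set V
  | S, [] => S
  | S, i :: l => mutPlusList τ (mutPlus τ S i) l

/-- Iterated sink mutations `s^-_{i_r} ⋯ s^-_{i_1} S`. -/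
def mutMinusList {V : Type} (τ : V ≃ V) : Set V → List V → Set V
  | S, [] => S
  | S, i :: l => mutMinusList τ (mutMinus τ S i) l

/-- `[i_1, …, i_r]` is an *admissible source sequence* for `S`. -/
def AdmissibleSourceSeq {V : Type} [Quiver.{1} V] (τ : V ≃ V) : Set V → List V → Prop
  | _, [] => True
  | S, i :: l => IsSliceSource S i ∧ AdmissibleSourceSeq τ (mutPlus τ S i) l

/-- `[i_1, …, i_r]` is an *admissible sink sequence* for `S`. -/
def AdmissibleSinkSeq {V : Type} [Quiver.{1} V] (τ : V ≃ V) : Set V → List V → Prop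
  | _, [] => True
  | S, i :: l => IsSliceSink S i ∧ AdmissibleSinkSeq τ (mutMinus τ S i) l

/-- One mixed mutation step: `(true, i)` is `s_i^+`, `(false, i)` is `s_i^-`. -/
def mutStep {V : Type} (τ : V ≃ V) (S : Set V) : Bool × V → Set V
  | (true, i) => mutPlus τ S i
  | (false, i) => mutMinus τ S i

/-- Iterated mixed mutations. -/
def mutMixedList {V : Type} (τ : V ≃ V) : Set V → List (Bool × V) → Set V
  | S, [] => S
  | S, s :: l => mutMixedList τ (mutStep τ S s) l

/-- Admissibility of a mixed sequence of mutations: each `s_i^+` is taken at a source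
and each `s_i^-` at a sink of the current slice. -/
def AdmissibleMixedSeq {V : Type} [Quiver.{1} V] (τ : V ≃ V) : Set V → List (Bool × V) → Prop
  | _, [] => True
  | S, (true, i) :: l => IsSliceSource S i ∧ AdmissibleMixedSeq τ (mutPlus τ S i) l
  | S, (false, i) :: l => IsSliceSink S i ∧ AdmissibleMixedSeq τ (mutMinus τ S i) l

end

/-! Self-injectivity extends a bound path ending at `i` to a maximal bound path, which has
length `n + 1` and starts at `τ i`; the added piece is again bound because the ideal `(ρ)`
is two-sided, so subpaths of bound paths are bound. Part (2) is dual. -/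

namespace BoundQuiver

variable {k : Type} [Field k] {V : Type} [Quiver.{1} V] (B : BoundQuiver k V)

lemma mapDomain_comp_mem_idl {i j i' j' : V} (pre : Quiver.Path i' i) (post : Quiver.Path j j')
    {x : Quiver.Path i j →₀ k} (hx : x ∈ B.idl i j) :
    Finsupp.mapDomain (fun p => (pre.comp p).comp post) x ∈ B.idl i' j' := by
  induction hx using Submodule.span_induction with
  | mem x hx =>
    obtain ⟨a, b, pre₀, post₀, r, hr, rfl⟩ := hx
    refine Submodule.subset_span ⟨a, b, pre.comp pre₀, post₀.comp post, r, hr, ?_⟩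
    rw [← Finsupp.mapDomain_comp]
    congr 1
    funext p
    simp only [Function.comp, Quiver.Path.comp_assoc]
  | zero => simp
  | add x y _ _ hx hy => rw [Finsupp.mapDomain_add]; exact add_mem hx hy
  | smul c x _ hx => rw [Finsupp.mapDomain_smul]; exact Submodule.smul_mem _ c hx

variable {B}

lemma Bound.of_comp_comp {i' i j j' : V} {x : Quiver.Path i' i} {p : Quiver.Path i j}
    {y : Quiver.Path j j'} (h : B.Bound ((x.comp p).comp y)) : B.Bound p := fun hp =>
  h (by simpa only [Finsupp.mapDomain_single] using B.mapDomain_comp_mem_idl x y hp)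

lemma Bound.of_comp_left {i j l : V} {p : Quiver.Path i j} {q : Quiver.Path j l}
    (h : B.Bound (p.comp q)) : B.Bound p :=
  Bound.of_comp_comp (x := .nil) (by rwa [Quiver.Path.nil_comp])

lemma Bound.of_comp_right {i j l : V} {p : Quiver.Path i j} {q : Quiver.Path j l}
    (h : B.Bound (p.comp q)) : B.Bound q :=
  Bound.of_comp_comp (y := .nil) (by rwa [Quiver.Path.comp_nil])

end BoundQuiver

namespace IsStableTranslationQuiver

variable {k : Type} [Field k] {V : Type} [Quiver.{1} V] {B : BoundQuiver k V} {n : ℕ}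
  {τ : V ≃ V}

lemma exists_bound_path_from_tau (hT : IsStableTranslationQuiver B n τ) {a i : V}
    {p : Quiver.Path a i} (hp : B.Bound p) :
    ∃ q : Quiver.Path (τ i) a, B.Bound q ∧ p.length + q.length = n + 1 := by
  obtain ⟨q, hq⟩ := hT.extend_left p hp
  have hlen := hT.max_len _ hq
  rw [Quiver.Path.length_comp] at hlen
  exact ⟨q, hq.1.of_comp_left, by omega⟩

lemma exists_bound_path_to_tau_symm (hT : IsStableTranslationQuiver B n τ) {j a : V}
    {p : Quiver.Path j a} (hp : B.Bound p) :
    ∃ q : Quiver.Path a (τ.symm j), B.Bound q ∧ p.length + q.length = n + 1 := by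
  obtain ⟨q, hq⟩ := hT.extend_right p hp
  have hlen := hT.max_len _ hq
  rw [Quiver.Path.length_comp] at hlen
  exact ⟨q, hq.1.of_comp_right, hlen⟩

end IsStableTranslationQuiver

/-- Lemma `two_bound_paths`.
Let `Q̄` be a stable `n`-translation quiver with `n`-translation `τ`.
(1) If `p` and `p'` are bound paths with `t(p) = t(p') = i`, then there are bound paths
`q` and `q'` with `s(q) = s(q') = τ i`, `t(q) = s(p)` and `t(q') = s(p')`, such that
`l(p) + l(q) = n+1 = l(p') + l(q')`.
(2) If `p` and `p'` are bound paths with `s(p) = s(p') = j`, then there are bound paths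
`q` and `q'` with `t(q) = t(q') = τ⁻¹ j`, `s(q) = t(p)` and `s(q') = t(p')`, such that
`l(p) + l(q) = n+1 = l(p') + l(q')`. -/
theorem two_bound_paths {k : Type} [Field k] {V : Type} [Quiver.{1} V]
    (B : BoundQuiver k V) (n : ℕ) (τ : V ≃ V)
    (hT : IsStableTranslationQuiver B n τ) :
    (∀ {a b i : V} (p : Quiver.Path a i) (p' : Quiver.Path b i),
      B.Bound p → B.Bound p' →
        ∃ (q : Quiver.Path (τ i) a) (q' : Quiver.Path (τ i) b),
          B.Bound q ∧ B.Bound q' ∧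
            p.length + q.length = n + 1 ∧ p'.length + q'.length = n + 1) ∧
    (∀ {a b j : V} (p : Quiver.Path j a) (p' : Quiver.Path j b),
      B.Bound p → B.Bound p' →
        ∃ (q : Quiver.Path a (τ.symm j)) (q' : Quiver.Path b (τ.symm j)),
          B.Bound q ∧ B.Bound q' ∧
            p.length + q.length = n + 1 ∧ p'.length + q'.length = n + 1) := by
  constructor
  · intro a b i p p' hp hp'
    obtain ⟨q, hq, hlen⟩ := hT.exists_bound_path_from_tau hp
    obtain ⟨q', hq', hlen'⟩ := hT.exists_bound_path_from_tau hp'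
    exact ⟨q, q', hq, hq', hlen, hlen'⟩
  · intro a b j p p' hp hp'
    obtain ⟨q, hq, hlen⟩ := hT.exists_bound_path_to_tau_symm hp
    obtain ⟨q', hq', hlen'⟩ := hT.exists_bound_path_to_tau_symm hp'
    exact ⟨q, q', hq, hq', hlen, hlen'⟩
end
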